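/- arXiv:2605.18568 — 3 statements merged into one kernel-verified Lean document; each statement's English description precedes it below -/
import Mathlib

section
/- There exists a k-linear differential operator D' on k[t] with D'(1) = 0 and D'(g) = 1, for any fixed nonzero non-unit g ∈ k[t]; consequently, for g ∈ I and D = f·D' ∈ D_A, one has D(A) ⊆ I but D(g) = f ∉ I². -/
open Polynomial

/-- The operator of multiplication by the polynomial `p`. -/
noncomputable def mulOp {k : Type*} [CommRing k] (p : k[X]) : Module.End k k[X] :=
  LinearMap.mulLeft k p

/-- The Weyl algebra `D_B`, realized as the subalgebra of `k`-linear endomorphisms of `k[t]`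
generated by multiplication by `t` and the derivative `∂`. -/
noncomputable def Weyl (k : Type*) [CommRing k] : Subalgebra k (Module.End k k[X]) :=
  Algebra.adjoin k {mulOp X, (derivative : k[X] →ₗ[k] k[X])}

/-- The left ideal `I·D_B` where `I = f·k[t]`: the `k`-span of operators `g·D`
with `g ∈ I` and `D ∈ D_B`. -/
noncomputable def IDB {k : Type*} [CommRing k] (f : k[X]) : Submodule k (Module.End k k[X]) :=
  Submodule.span k {E | ∃ g D, g ∈ Ideal.span {f} ∧ D ∈ Weyl k ∧ E = mulOp g * D}

/-- Membership in `D_A = k + I·D_B`. -/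
def memDA {k : Type*} [CommRing k] (f : k[X]) (E : Module.End k k[X]) : Prop :=
  ∃ c : k, E - algebraMap k (Module.End k k[X]) c ∈ IDB f

/-- Membership in `A = k + I` where `I = f·k[t]`. -/
def memA {k : Type*} [CommRing k] (f : k[X]) (p : k[X]) : Prop :=
  ∃ c : k, p - C c ∈ Ideal.span {f}

/-- `f` is a product of `r ≥ 2` pairwise coprime irreducible polynomials. -/
def NiceF {k : Type*} [CommRing k] (f : k[X]) : Prop :=
  ∃ (r : ℕ) (fs : Fin r → k[X]), 2 ≤ r ∧ (∀ i, Irreducible (fs i)) ∧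
    (∀ i j, i ≠ j → IsCoprime (fs i) (fs j)) ∧ f = ∏ i, fs i

lemma mulOp_mul_apply {k : Type*} [CommRing k] (p : k[X]) (D : Module.End k k[X]) (q : k[X]) :
    (mulOp p * D) q = p * D q :=
  rfl

lemma derivative_mem_weyl (k : Type*) [CommRing k] :
    (derivative : k[X] →ₗ[k] k[X]) ∈ Weyl k :=
  Algebra.subset_adjoin (by simp)

lemma iterate_derivative_natDegree_self {R : Type*} [Semiring R] (p : R[X]) :
    derivative^[p.natDegree] p = C ((p.natDegree.factorial : R) * p.leadingCoeff) := by
  have hdeg : (derivative^[p.natDegree] p).natDegree = 0 :=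
    Nat.le_zero.mp ((natDegree_iterate_derivative p _).trans_eq (Nat.sub_self _))
  rw [eq_C_of_natDegree_eq_zero hdeg, coeff_iterate_derivative, zero_add, Nat.descFactorial_self,
    nsmul_eq_mul, leadingCoeff]

/-- The witness is `(n! · lc g)⁻¹ ∂ⁿ` with `n = deg g`. -/
theorem exists_mem_weyl_apply_one_eq_zero_apply_eq_one {k : Type*} [Field k] [CharZero k]
    {g : k[X]} (hg : 0 < g.natDegree) : ∃ D ∈ Weyl k, D 1 = 0 ∧ D g = 1 := by
  have hc : (g.natDegree.factorial : k) * g.leadingCoeff ≠ 0 :=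
    mul_ne_zero (Nat.cast_ne_zero.mpr g.natDegree.factorial_ne_zero)
      (leadingCoeff_ne_zero.mpr (ne_zero_of_natDegree_gt hg))
  refine ⟨((g.natDegree.factorial : k) * g.leadingCoeff)⁻¹ •
      (derivative : k[X] →ₗ[k] k[X]) ^ g.natDegree, ?_, ?_, ?_⟩
  · exact Subalgebra.smul_mem _ (Subalgebra.pow_mem _ (derivative_mem_weyl k) _) _
  · rw [LinearMap.smul_apply, Module.End.pow_apply, iterate_derivative_one hg, smul_zero]
  · rw [LinearMap.smul_apply, Module.End.pow_apply, iterate_derivative_natDegree_self, smul_C,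
      smul_eq_mul, inv_mul_cancel₀ hc, map_one]

lemma self_notMem_span_singleton_sq {R : Type*} [CommRing R] [IsDomain R] {f : R} (hf0 : f ≠ 0)
    (hfu : ¬IsUnit f) : f ∉ Ideal.span {f} ^ 2 := by
  rw [Ideal.span_singleton_pow, Ideal.mem_span_singleton, sq]
  intro h
  exact hfu (isUnit_of_dvd_one ((mul_dvd_mul_iff_left hf0).mp (by rwa [mul_one])))

namespace NiceF

variable {k : Type*} [CommRing k] {f : k[X]}

lemma ne_zero [IsDomain k] (hf : NiceF f) : f ≠ 0 := by
  obtain ⟨r, fs, -, hirr, -, rfl⟩ := hf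
  exact Finset.prod_ne_zero_iff.mpr fun i _ => (hirr i).ne_zero

lemma not_isUnit (hf : NiceF f) : ¬IsUnit f := by
  obtain ⟨r, fs, hr, hirr, -, rfl⟩ := hf
  let i : Fin r := ⟨0, by omega⟩
  exact fun hu => (hirr i).not_isUnit
    (isUnit_of_dvd_unit (Finset.dvd_prod_of_mem fs (Finset.mem_univ i)) hu)

end NiceF

/-- for any nonzero non-unit `g` there is `D' ∈ D_B` with `D'(1) = 0`, `D'(g) = 1`;
consequently if `g ∈ I` then `D = f·D'` maps `A` into `I`, `D(g) = f`, and `f ∉ I²`. -/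
theorem stmt1 {k : Type*} [Field k] [CharZero k] (f : k[X]) (hf : NiceF f)
    (g : k[X]) (hg0 : g ≠ 0) (hgu : ¬ IsUnit g) :
    ∃ D' ∈ Weyl k, D' 1 = 0 ∧ D' g = 1 ∧
      (g ∈ Ideal.span {f} →
        (∀ a, memA f a → (mulOp f * D') a ∈ Ideal.span {f}) ∧
        (mulOp f * D') g = f ∧ f ∉ (Ideal.span {f} : Ideal k[X]) ^ 2) := by
  obtain ⟨D', hD'W, hD'1, hD'g⟩ := exists_mem_weyl_apply_one_eq_zero_apply_eq_one
    (natDegree_pos_iff_degree_pos.mpr (degree_pos_of_ne_zero_of_nonunit hg0 hgu))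
  refine ⟨D', hD'W, hD'1, hD'g, fun _ => ⟨fun a _ => ?_, ?_,
    self_notMem_span_singleton_sq hf.ne_zero hf.not_isUnit⟩⟩
  · rw [mulOp_mul_apply]
    exact Ideal.mul_mem_right _ _ (Ideal.mem_span_singleton_self f)
  · rw [mulOp_mul_apply, hD'g, mul_one]
end

section
/- There exists an operator D ∈ D_A such that D(I²) ⊄ I². Specifically, for any g ∈ I², there is D' ∈ D_B with D'(g) = 1, and then D = f·D' ∈ D_A satisfies D(g) = f ∉ I². -/
open Polynomial

lemma exists_weyl_eq_one {k : Type*} [Field k] [CharZero k] :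
    ∀ (n : ℕ) (g : k[X]), g.natDegree = n → g ≠ 0 → ∃ D ∈ Weyl k, D g = 1 := by
  intro n
  induction n using Nat.strong_induction_on with
  | _ n ih =>
    intro g hn hg
    by_cases h0 : g.natDegree = 0
    · obtain ⟨a, ha⟩ := Polynomial.natDegree_eq_zero.mp h0
      have ha0 : a ≠ 0 := by
        intro h; apply hg; rw [← ha, h, map_zero]
      refine ⟨algebraMap k _ a⁻¹, Subalgebra.algebraMap_mem _ _, ?_⟩
      rw [Module.algebraMap_end_apply, ← ha, Polynomial.smul_C, smul_eq_mul,
        inv_mul_cancel₀ ha0, Polynomial.C_1]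
    · have hd0 : derivative g ≠ 0 := by
        intro h; exact h0 (Polynomial.natDegree_eq_zero_of_derivative_eq_zero h)
      have hlt : (derivative g).natDegree < n := by
        rw [← hn]; exact Polynomial.natDegree_derivative_lt h0
      obtain ⟨D, hD, hDg⟩ := ih _ hlt (derivative g) rfl hd0
      refine ⟨D * (derivative : k[X] →ₗ[k] k[X]), ?_, ?_⟩
      · exact mul_mem hD (Algebra.subset_adjoin (Set.mem_insert_iff.mpr (Or.inr rfl)))
      · simpa using hDg

lemma f_notMem_sq {k : Type*} [Field k] (f : k[X]) (hf : NiceF f) :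
    f ∉ (Ideal.span {f} : Ideal k[X]) ^ 2 := by
  obtain ⟨r, fs, hr, hirr, -, hprod⟩ := hf
  have hf0 : f ≠ 0 := by
    rw [hprod]
    exact Finset.prod_ne_zero_iff.mpr fun i _ => (hirr i).ne_zero
  have hfu : ¬ IsUnit f := by
    intro hu
    have i0 : Fin r := ⟨0, by omega⟩
    exact (hirr i0).not_isUnit (isUnit_of_dvd_unit
      (by rw [hprod]; exact Finset.dvd_prod_of_mem _ (Finset.mem_univ i0)) hu)
  rw [Ideal.span_singleton_pow, Ideal.mem_span_singleton]
  intro hdvd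
  apply hfu
  exact isUnit_of_dvd_one (by
    have : f * f ∣ f * 1 := by simpa [pow_two] using hdvd
    exact (mul_dvd_mul_iff_left hf0).mp this)


/-- there is `D ∈ D_A` with `D(I²) ⊄ I²`; specifically, for any nonzero `g ∈ I²`
there is `D' ∈ D_B` with `D'(g) = 1`, and `D = f·D'` satisfies `D(g) = f ∉ I²`. -/
theorem stmt2 {k : Type*} [Field k] [CharZero k] (f : k[X]) (hf : NiceF f) :
    (∃ D, memDA f D ∧ ∃ g ∈ (Ideal.span {f} : Ideal k[X]) ^ 2,
        D g ∉ (Ideal.span {f} : Ideal k[X]) ^ 2) ∧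
    (∀ g ∈ (Ideal.span {f} : Ideal k[X]) ^ 2, g ≠ 0 →
      ∃ D' ∈ Weyl k, D' g = 1 ∧ (mulOp f * D') g = f ∧
        f ∉ (Ideal.span {f} : Ideal k[X]) ^ 2) := by
  have key : ∀ g ∈ (Ideal.span {f} : Ideal k[X]) ^ 2, g ≠ 0 →
      ∃ D' ∈ Weyl k, D' g = 1 ∧ (mulOp f * D') g = f ∧
        f ∉ (Ideal.span {f} : Ideal k[X]) ^ 2 := by
    intro g _ hg
    obtain ⟨D, hD, hDg⟩ := exists_weyl_eq_one g.natDegree g rfl hg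
    refine ⟨D, hD, hDg, ?_, f_notMem_sq f hf⟩
    show mulOp f (D g) = f
    rw [hDg]; simp [mulOp]
  have hf0 : f ≠ 0 := by
    obtain ⟨r, fs, hr, hirr, -, hprod⟩ := hf
    rw [hprod]
    exact Finset.prod_ne_zero_iff.mpr fun i _ => (hirr i).ne_zero
  have hf2 : f ^ 2 ∈ (Ideal.span {f} : Ideal k[X]) ^ 2 :=
    Ideal.pow_mem_pow (Ideal.mem_span_singleton_self f) 2
  obtain ⟨D, hD, hDg, hDg2, hns⟩ := key (f ^ 2) hf2 (pow_ne_zero 2 hf0)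
  refine ⟨⟨mulOp f * D, ⟨0, ?_⟩, f ^ 2, hf2, by rw [hDg2]; exact hns⟩, key⟩
  rw [map_zero, sub_zero]
  exact Submodule.subset_span ⟨f, D, Ideal.mem_span_singleton_self f, hD, rfl⟩
end

section
/- D_A is not R(A)-locally projective: there exists D ∈ D_A for which there are no a₁,…,a_n ∈ A and D₁,…,D_n ∈ D_A with D = Σᵢ D(aᵢ)·Dᵢ (as operators on B, where D(aᵢ)·Dᵢ means b ↦ D(aᵢ)·Dᵢ(b)). -/
open Polynomial

section Aux

open Polynomial

/-- Every element of `I·D_B`, applied to any polynomial, lands in `I = (f)`. -/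
lemma IDB_apply_mem {k : Type*} [CommRing k] (f : k[X]) {E : Module.End k k[X]}
    (hE : E ∈ IDB f) (b : k[X]) : E b ∈ Ideal.span {f} := by
  have h : IDB f ≤
      Submodule.comap (LinearMap.applyₗ b : Module.End k k[X] →ₗ[k] k[X])
        ((Ideal.span {f}).restrictScalars k) := by
    rw [IDB, Submodule.span_le]
    rintro E ⟨g, D, hg, -, rfl⟩
    show (mulOp g * D) b ∈ Ideal.span {f}
    rw [Module.End.mul_apply, mulOp, LinearMap.mulLeft_apply]
    exact Ideal.mul_mem_right _ _ hg
  exact h hE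

/-- Every element of `D_A`, applied to `b`, is congruent to `cᵢ • b` mod `(f)`. -/
lemma memDA_apply {k : Type*} [CommRing k] (f : k[X]) {E : Module.End k k[X]} {c : k}
    (hE : E - algebraMap k (Module.End k k[X]) c ∈ IDB f) (b : k[X]) :
    E b - C c * b ∈ Ideal.span {f} := by
  have := IDB_apply_mem f hE b
  rwa [LinearMap.sub_apply, Module.algebraMap_end_apply, Polynomial.smul_eq_C_mul] at this

end Aux

/-- `D_A` is not `R(A)`-locally projective: some `D ∈ D_A` admits no finite
family `aᵢ ∈ A`, `Dᵢ ∈ D_A` with `D = Σᵢ D(aᵢ)·Dᵢ`. -/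
theorem stmt5 {k : Type*} [Field k] [CharZero k] (f : k[X]) (hf : NiceF f) :
    ∃ D, memDA f D ∧
      ¬ ∃ (n : ℕ) (a : Fin n → k[X]) (Ds : Fin n → Module.End k k[X]),
          (∀ i, memA f (a i)) ∧ (∀ i, memDA f (Ds i)) ∧
          D = ∑ i, mulOp (D (a i)) * Ds i := by
  classical
  obtain ⟨r, fs, hr, hirr, -, hprod⟩ := hf
  have hi0 : Irreducible (fs ⟨0, by omega⟩) := hirr _
  have hfne : f ≠ 0 := by
    rw [hprod]
    exact Finset.prod_ne_zero_iff.mpr fun i _ => (hirr i).ne_zero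
  have hfnu : ¬ IsUnit f := by
    intro hu
    exact hi0.not_isUnit (isUnit_of_dvd_unit
      (by rw [hprod]; exact Finset.dvd_prod_of_mem fs (Finset.mem_univ _)) hu)
  refine ⟨mulOp f * (derivative : k[X] →ₗ[k] k[X]), ?_, ?_⟩
  · refine ⟨0, ?_⟩
    rw [map_zero, sub_zero]
    exact Submodule.subset_span ⟨f, (derivative : k[X] →ₗ[k] k[X]),
      Ideal.mem_span_singleton_self f,
      Algebra.subset_adjoin (Set.mem_insert_iff.mpr (Or.inr rfl)), rfl⟩
  · rintro ⟨n, a, Ds, -, hDs, heq⟩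
    choose c hc using hDs
    -- applying both sides to `b` and cancelling `f`
    have key : ∀ b : k[X], derivative b = ∑ i, derivative (a i) * (Ds i b) := by
      intro b
      have h := DFunLike.congr_fun heq b
      have hL : (mulOp f * (derivative : k[X] →ₗ[k] k[X])) b = f * derivative b := by
        rw [Module.End.mul_apply, mulOp, LinearMap.mulLeft_apply]
      have hR : (∑ i, mulOp ((mulOp f * (derivative : k[X] →ₗ[k] k[X])) (a i)) * Ds i) b
          = f * ∑ i, derivative (a i) * (Ds i b) := by
        rw [LinearMap.sum_apply, Finset.mul_sum]
        refine Finset.sum_congr rfl fun i _ => ?_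
        simp only [mulOp, Module.End.mul_apply, LinearMap.mulLeft_apply, mul_assoc]
      rw [hL, hR] at h
      exact mul_left_cancel₀ hfne h
    set J : Ideal k[X] := Ideal.span {f} with hJ
    have hq : ∀ i b, Ideal.Quotient.mk J (Ds i b) = Ideal.Quotient.mk J (C (c i) * b) :=
      fun i b => Ideal.Quotient.eq.mpr (memDA_apply f (hc i) b)
    have h1 : Ideal.Quotient.mk J (∑ i, derivative (a i) * C (c i)) = 0 := by
      have h0 := congrArg (Ideal.Quotient.mk J) (key 1)
      rw [derivative_one, map_zero, map_sum] at h0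
      rw [map_sum]
      have e : ∀ i ∈ Finset.univ, Ideal.Quotient.mk J (derivative (a i) * C (c i))
          = Ideal.Quotient.mk J (derivative (a i) * (Ds i) 1) := by
        intro i _
        rw [map_mul, map_mul, hq i 1, map_mul, map_one, mul_one]
      exact (Finset.sum_congr rfl e).trans h0.symm
    have hX : (1 : k[X] ⧸ J) = 0 := by
      have := congrArg (Ideal.Quotient.mk J) (key X)
      rw [derivative_X, map_one, map_sum] at this
      have h2 : ∀ i ∈ Finset.univ, Ideal.Quotient.mk J (derivative (a i) * Ds i X)
          = Ideal.Quotient.mk J (derivative (a i) * C (c i)) * Ideal.Quotient.mk J X := by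
        intro i _
        rw [map_mul, hq i X, map_mul, map_mul, mul_assoc]
      rw [Finset.sum_congr rfl h2, ← Finset.sum_mul, ← map_sum, h1, zero_mul] at this
      exact this
    have : (1 : k[X]) ∈ J := by
      rwa [← Ideal.Quotient.eq_zero_iff_mem]
    exact hfnu (Ideal.span_singleton_eq_top.mp ((Ideal.eq_top_iff_one J).mpr this))
end
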